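/- Let B be the 10×10 edge-substitution matrix of the chair tiling (as above). Then the direct limit of ℤ¹⁰ → ℤ¹⁰ → ⋯ with bonding map given by multiplication by Bᵀ is isomorphic as an abelian group to ℤ[1/2] ⊕ ℤ⁸. -/

import Mathlib

/-!
`Bᵀ` has the left eigenvector `φ = e₂ + e₃` for the eigenvalue `2` and eight independent left
eigenvectors `ψ` for the eigenvalue `1`. Together they map `ℤ¹⁰` onto `ℤ × ℤ⁸`, and `Bᵀ` kills
their common kernel. So the stage-`n` maps `v ↦ (φ v / 2ⁿ, ψ v)` are compatible with the bonding
maps, jointly injective on the direct limit, and their images exhaust `ℤ[1/2] × ℤ⁸`.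
-/

/-- The additive group `ℤ[1/2]` of dyadic rationals, as an additive subgroup of `ℚ`. -/
def dyadic : AddSubgroup ℚ :=
  AddSubgroup.closure {q : ℚ | ∃ n : ℕ, q = ((2 : ℚ) ^ n)⁻¹}

/-- The abelianization matrix of the substitution induced on horizontal edges of the
decorated chair tiling. -/
def chairEdgeMatrix : Matrix (Fin 10) (Fin 10) ℤ :=
  !![1,0,0,0,0,0,0,0,0,0;
     0,1,0,0,0,0,0,0,0,0;
     0,0,1,1,1,1,0,0,1,1;
     1,1,1,1,0,0,1,1,0,0;
     0,0,0,0,1,0,0,0,0,0;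
     0,0,0,0,0,1,0,0,0,0;
     0,0,0,0,0,0,1,0,0,0;
     0,0,0,0,0,0,0,1,0,0;
     0,0,0,0,0,0,0,0,1,0;
     0,0,0,0,0,0,0,0,0,1]

def edgeEnd : AddMonoid.End (Fin 10 → ℤ) :=
  (chairEdgeMatrix.transpose.mulVecLin).toAddMonoidHom

section StationaryLimit

variable {A B : Type*} [AddCommGroup A] [AddCommGroup B]

abbrev iterateBonding (f : AddMonoid.End A) (i j : ℕ) (_ : i ≤ j) : A →+ A := f ^ (j - i)

instance (f : AddMonoid.End A) :
    DirectedSystem (fun _ : ℕ => A) (fun i j h => iterateBonding f i j h) where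
  map_self i x := by
    change (f ^ (i - i)) x = x
    rw [Nat.sub_self, pow_zero, AddMonoid.End.one_apply]
  map_map {k j i} hij hjk x := by
    change ((f ^ (k - j)) * (f ^ (j - i))) x = (f ^ (k - i)) x
    rw [← pow_add, Nat.sub_add_sub_cancel hjk hij]

namespace AddCommGroup.DirectLimit

variable {f : AddMonoid.End A} {g : ℕ → A →+ B}

theorem iterateBonding_compat (hg : ∀ n v, g (n + 1) (f v) = g n v) (i j : ℕ) (hij : i ≤ j)
    (v : A) : g j (iterateBonding f i j hij v) = g i v := by
  obtain ⟨k, rfl⟩ := Nat.exists_eq_add_of_le hij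
  change g (i + k) ((f ^ (i + k - i)) v) = g i v
  rw [Nat.add_sub_cancel_left, AddMonoid.End.coe_pow]
  induction k with
  | zero => rfl
  | succ k ih => rw [Function.iterate_succ_apply', ← add_assoc, hg, ih (by omega)]

variable (hg : ∀ n v, g (n + 1) (f v) = g n v)

theorem lift_iterateBonding_injective (hker : ∀ n v, g n v = 0 → f v = 0) :
    Function.Injective
      (lift _ (iterateBonding f) B g (iterateBonding_compat hg)) := by
  refine (injective_iff_map_eq_zero _).2 fun x hx => ?_
  induction x using DirectLimit.induction_on with
  | ih n v =>
    rw [DirectLimit.lift_of] at hx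
    have hfv : iterateBonding f n (n + 1) n.le_succ v = 0 := by
      change (f ^ (n + 1 - n)) v = 0
      rw [Nat.add_sub_cancel_left, pow_one]
      exact hker n v hx
    rw [← DirectLimit.of_f n.le_succ, hfv, map_zero]

theorem mem_range_lift_iterateBonding {b : B} :
    b ∈ (lift _ (iterateBonding f) B g (iterateBonding_compat hg)).range ↔
      ∃ n v, g n v = b := by
  constructor
  · rintro ⟨x, rfl⟩
    induction x using DirectLimit.induction_on with
    | ih n v => exact ⟨n, v, (DirectLimit.lift_of ..).symm⟩
  · rintro ⟨n, v, rfl⟩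
    exact ⟨DirectLimit.of _ _ n v, DirectLimit.lift_of ..⟩

end AddCommGroup.DirectLimit

end StationaryLimit

open AddCommGroup.DirectLimit

theorem mem_dyadic_iff {q : ℚ} : q ∈ dyadic ↔ ∃ (m : ℤ) (n : ℕ), (m : ℚ) / 2 ^ n = q := by
  constructor
  · intro hq
    induction hq using AddSubgroup.closure_induction with
    | mem q hq =>
      obtain ⟨n, rfl⟩ := hq
      exact ⟨1, n, by simp⟩
    | zero => exact ⟨0, 0, by simp⟩
    | add q r _ _ hq hr =>
      obtain ⟨m, n, rfl⟩ := hq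
      obtain ⟨m', n', rfl⟩ := hr
      refine ⟨m * 2 ^ n' + m' * 2 ^ n, n + n', ?_⟩
      push_cast
      field_simp
      ring
    | neg q _ hq =>
      obtain ⟨m, n, rfl⟩ := hq
      exact ⟨-m, n, by push_cast; ring⟩
  · rintro ⟨m, n, rfl⟩
    rw [div_eq_mul_inv, ← zsmul_eq_mul]
    exact zsmul_mem (AddSubgroup.subset_closure ⟨n, rfl⟩ : ((2 : ℚ) ^ n)⁻¹ ∈ dyadic) m

section DyadicSplitting

variable {A C : Type*} [AddCommGroup A] [AddCommGroup C] {f : AddMonoid.End A}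
  (φ : A →+ ℤ) (ψ : A →+ C)

def dyadicCoords (n : ℕ) : A →+ ℚ × C :=
  AddMonoidHom.mk' (fun v => ((φ v : ℚ) / 2 ^ n, ψ v)) fun v w => by simp [add_div]

theorem dyadicCoords_eq_zero_iff {n : ℕ} {v : A} :
    dyadicCoords φ ψ n v = 0 ↔ φ v = 0 ∧ ψ v = 0 := by
  simp [dyadicCoords]

variable {φ ψ} (hφ : ∀ v, φ (f v) = 2 * φ v) (hψ : ∀ v, ψ (f v) = ψ v)
include hφ hψ

theorem dyadicCoords_succ_apply (n : ℕ) (v : A) :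
    dyadicCoords φ ψ (n + 1) (f v) = dyadicCoords φ ψ n v := by
  simp only [dyadicCoords, AddMonoidHom.mk'_apply, hφ, hψ, Prod.mk.injEq, and_true]
  push_cast
  rw [pow_succ, mul_comm, mul_div_mul_right _ _ two_ne_zero]

theorem lift_dyadicCoords_injective (hker : ∀ v, φ v = 0 → ψ v = 0 → f v = 0) :
    Function.Injective (AddCommGroup.DirectLimit.lift _ (iterateBonding f) _ (dyadicCoords φ ψ)
      (iterateBonding_compat (dyadicCoords_succ_apply hφ hψ))) :=
  lift_iterateBonding_injective (dyadicCoords_succ_apply hφ hψ) fun _ v hv =>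
    have ⟨hφv, hψv⟩ := (dyadicCoords_eq_zero_iff φ ψ).1 hv
    hker v hφv hψv

theorem range_lift_dyadicCoords (hsurj : ∀ m c, ∃ v, φ v = m ∧ ψ v = c) :
    (AddCommGroup.DirectLimit.lift _ (iterateBonding f) _ (dyadicCoords φ ψ)
      (iterateBonding_compat (dyadicCoords_succ_apply hφ hψ))).range = dyadic.prod ⊤ := by
  ext ⟨q, c⟩
  rw [mem_range_lift_iterateBonding (dyadicCoords_succ_apply hφ hψ)]
  simp only [AddSubgroup.mem_prod, AddSubgroup.mem_top, and_true,
    mem_dyadic_iff, dyadicCoords, AddMonoidHom.mk'_apply, Prod.mk.injEq]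
  constructor
  · rintro ⟨n, v, hq, -⟩
    exact ⟨φ v, n, hq⟩
  · rintro ⟨m, n, hq⟩
    obtain ⟨v, rfl, rfl⟩ := hsurj m c
    exact ⟨n, v, hq, rfl⟩

noncomputable def directLimitEquivDyadicProd (hker : ∀ v, φ v = 0 → ψ v = 0 → f v = 0)
    (hsurj : ∀ m c, ∃ v, φ v = m ∧ ψ v = c) :
    AddCommGroup.DirectLimit (fun _ : ℕ => A) (iterateBonding f) ≃+ dyadic × C :=
  (AddMonoidHom.ofInjective (lift_dyadicCoords_injective hφ hψ hker)).trans <|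
    (AddEquiv.addSubgroupCongr (range_lift_dyadicCoords hφ hψ hsurj)).trans <|
      (AddSubgroup.prodEquiv dyadic ⊤).trans (.prodCongr (.refl _) AddSubgroup.topEquiv)

end DyadicSplitting

theorem edgeEnd_apply (v : Fin 10 → ℤ) :
    edgeEnd v = ![v 0 + v 3, v 1 + v 3, v 2 + v 3, v 2 + v 3, v 2 + v 4,
      v 2 + v 5, v 3 + v 6, v 3 + v 7, v 2 + v 8, v 2 + v 9] := by
  change chairEdgeMatrix.transpose.mulVec v = _
  ext i
  fin_cases i <;> simp [chairEdgeMatrix, Matrix.mulVec, dotProduct, Fin.sum_univ_succ]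

def chairPhi : (Fin 10 → ℤ) →+ ℤ :=
  AddMonoidHom.mk' (fun v => v 2 + v 3) fun v w => by simp only [Pi.add_apply]; ring

def chairPsi : (Fin 10 → ℤ) →+ (Fin 8 → ℤ) :=
  AddMonoidHom.mk' (fun v => ![v 0 - v 1, v 1 - v 2, v 2 - v 6, v 6 - v 7,
      v 3 - v 4, v 4 - v 5, v 5 - v 8, v 8 - v 9]) fun v w => by
    ext k; fin_cases k <;> simp <;> ring

theorem chairPhi_edgeEnd (v : Fin 10 → ℤ) : chairPhi (edgeEnd v) = 2 * chairPhi v := by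
  simp only [chairPhi, edgeEnd_apply, AddMonoidHom.mk'_apply, Matrix.cons_val]
  ring

theorem chairPsi_edgeEnd (v : Fin 10 → ℤ) : chairPsi (edgeEnd v) = chairPsi v := by
  ext k
  fin_cases k <;>
    simp only [chairPsi, edgeEnd_apply, AddMonoidHom.mk'_apply, Fin.zero_eta, Fin.mk_one,
      Fin.reduceFinMk, Matrix.cons_val_zero, Matrix.cons_val_one, Matrix.cons_val] <;>
    ring

theorem edgeEnd_eq_zero {v : Fin 10 → ℤ} (hφ : chairPhi v = 0) (hψ : chairPsi v = 0) :
    edgeEnd v = 0 := by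
  simp only [chairPhi, AddMonoidHom.mk'_apply] at hφ
  simp only [chairPsi, AddMonoidHom.mk'_apply, funext_iff, Fin.forall_fin_succ, Pi.zero_apply,
    Matrix.cons_val_zero, Matrix.cons_val_succ, Matrix.cons_val_fin_one, forall_const] at hψ
  ext k; fin_cases k <;> simp [edgeEnd_apply] <;> omega

theorem exists_chairPhi_chairPsi (m : ℤ) (t : Fin 8 → ℤ) :
    ∃ v, chairPhi v = m ∧ chairPsi v = t := by
  -- solve `chairPsi v = t` from `v 7 = 0`, then `chairPhi v = m` through `v 3`
  refine ⟨![t 0 + t 1 + t 2 + t 3, t 1 + t 2 + t 3, t 2 + t 3, m - t 2 - t 3,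
    m - t 2 - t 3 - t 4, m - t 2 - t 3 - t 4 - t 5, t 3, 0,
    m - t 2 - t 3 - t 4 - t 5 - t 6, m - t 2 - t 3 - t 4 - t 5 - t 6 - t 7], ?_, ?_⟩
  · simp [chairPhi]
  · ext k; fin_cases k <;> simp [chairPsi]

/-- The direct limit of `ℤ¹⁰ → ℤ¹⁰ → ⋯` with bonding maps given by multiplication by the
transpose of the chair edge-substitution matrix is isomorphic, as an abelian group,
to `ℤ[1/2] ⊕ ℤ⁸`. -/
theorem directLimit_edge_iso :
    Nonempty (AddCommGroup.DirectLimit (fun _ : ℕ => Fin 10 → ℤ)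
        (fun i j _ => (id (edgeEnd ^ (j - i) : AddMonoid.End (Fin 10 → ℤ)) :
          (Fin 10 → ℤ) →+ (Fin 10 → ℤ)))
      ≃+ ↥dyadic × (Fin 8 → ℤ)) :=
  ⟨directLimitEquivDyadicProd chairPhi_edgeEnd chairPsi_edgeEnd (fun _ => edgeEnd_eq_zero)
    exists_chairPhi_chairPsi⟩
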